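/- arXiv:hep-th/9309033 — 2 statements merged into one kernel-verified Lean document; each statement's English description precedes it below -/
import Mathlib

section
/- Let n ≥ 3. Suppose given complex-valued functions on U: η, R^{iα} (1 ≤ i ≤ n, α ∈ Φ), R^{αβ} (α, β ∈ Φ with β = ±α), satisfying for all q ∈ U: (a) R^{α,−α} + R^{−α,α} = 0 for all α ∈ Φ; (b) −w′_α = η w_α + R^{−α,α} w_α − R^{αα} w_{−α} for all α ∈ Φ; (c) for all α, β ∈ Φ with α ≠ ±β: (Σ_i α_i R^{iβ}) w_α − (Σ_i β_i R^{iα}) w_β = c^β_{α,β−α}(R^{αα} w_{β−α} − R^{ββ} w_{α−β}) + c^β_{−α,β+α}(R^{−α,α} w_{β+α} + R^{−β,β} w_{β+α}), where terms whose subscript β∓α is not a root are absent. Then at every point of U: η = −(1/2)(R^{αα} + R^{−α,−α}) for every α ∈ Φ, and moreover η = 0. -/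
open scoped Classical

noncomputable section

/-- The `i`-th standard basis vector of `ℝ^n`. -/
def stdE {n : ℕ} (i : Fin n) : Fin n → ℝ := fun k => if k = i then 1 else 0

/-- The set of roots of `gl_n`: `Φ = {e_i − e_j : i ≠ j}`. -/
def Phi (n : ℕ) : Set (Fin n → ℝ) :=
  {x | ∃ i j : Fin n, i ≠ j ∧ x = stdE i - stdE j}

/-- Euclidean dot product on `ℝ^n`. -/
def dotR {n : ℕ} (x y : Fin n → ℝ) : ℝ := ∑ k, x k * y k

/-- Structure constants of `gl_n`: for roots `α = e_a − e_b`, `γ = e_c − e_d` with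
`α + γ ∈ Φ`, `cst α γ = δ_{bc} − δ_{da}` (the coefficient of `e_{α+γ}` in
`[e_{ab}, e_{cd}] = δ_{bc} e_{ad} − δ_{da} e_{cb}`), and `cst α γ = 0` in every
other case (in particular when a subscript fails to be a root, so that terms
containing `cst` with a non-root subscript are absent). -/
def cst {n : ℕ} (α γ : Fin n → ℝ) : ℝ :=
  if α ∈ Phi n ∧ γ ∈ Phi n ∧ α + γ ∈ Phi n then
    (∑ k, max (-(α k)) 0 * max (γ k) 0) - (∑ k, max (α k) 0 * max (-(γ k)) 0)
  else 0

/-- Sum of a quantity over all roots `α ∈ Φ` (each root `e_i − e_j`, `i ≠ j`,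
occurring exactly once). -/
def sumPhi {n : ℕ} (f : (Fin n → ℝ) → ℂ) : ℂ :=
  ∑ p ∈ (Finset.univ : Finset (Fin n)).offDiag, f (stdE p.1 - stdE p.2)

/-- `z(x) = w″(x)/(2 w(x))`. -/
def zfun (w : ℝ → ℂ) (x : ℝ) : ℂ := deriv (deriv w) x / (2 * w x)

/-! Adding (b) for `α` and `-α`, with `w` odd and `w'` even, and using (a) gives
`2η + R^{αα} + R^{-α,-α} = 0`. For `η = 0` fix distinct indices `a, b, c` and take (c) for the pairs
`(e_a - e_b, e_a - e_c)`, `(e_b - e_a, e_c - e_a)`, `(e_a - e_b, e_c - e_a)`, `(e_a - e_c, e_b - e_a)`: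
in a signed sum of the four identities the `R^{iβ}` terms cancel, and what is left is
`-4η w(q_b - q_c)`. -/

def stdRoot {n : ℕ} (i j : Fin n) : Fin n → ℝ := stdE i - stdE j

section Roots

variable {n : ℕ}

theorem stdRoot_mem_Phi {i j : Fin n} (h : i ≠ j) : stdRoot i j ∈ Phi n := ⟨i, j, h, rfl⟩

theorem neg_stdRoot (i j : Fin n) : -stdRoot i j = stdRoot j i := neg_sub _ _

theorem neg_mem_Phi {α : Fin n → ℝ} (h : α ∈ Phi n) : -α ∈ Phi n := by
  obtain ⟨i, j, hij, rfl⟩ := h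
  exact ⟨j, i, hij.symm, neg_sub _ _⟩

theorem stdRoot_add_stdRoot (i j k : Fin n) : stdRoot i j + stdRoot j k = stdRoot i k :=
  sub_add_sub_cancel _ _ _

theorem stdRoot_sub_stdRoot_left (i j k : Fin n) : stdRoot i k - stdRoot i j = stdRoot j k :=
  sub_sub_sub_cancel_left _ _ _

theorem stdRoot_sub_stdRoot_right (i j k : Fin n) : stdRoot k i - stdRoot j i = stdRoot k j :=
  sub_sub_sub_cancel_right _ _ _

theorem stdRoot_ne_of_ne_left {i j k l : Fin n} (hij : i ≠ j) (hik : i ≠ k) :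
    stdRoot i j ≠ stdRoot k l := by
  intro h
  have := congrFun h i
  simp only [stdRoot, stdE, Pi.sub_apply, if_neg hik] at this
  split_ifs at this <;> norm_num at this

theorem stdRoot_ne_of_ne_right {i j k l : Fin n} (hij : i ≠ j) (hjl : j ≠ l) :
    stdRoot i j ≠ stdRoot k l := by
  intro h
  have := congrFun h j
  simp only [stdRoot, stdE, Pi.sub_apply, if_neg hij.symm, if_neg hjl] at this
  split_ifs at this <;> norm_num at this

theorem dotR_neg (α q : Fin n → ℝ) : dotR (-α) q = -dotR α q := by
  simp [dotR]

theorem dotR_stdRoot (i j : Fin n) (q : Fin n → ℝ) : dotR (stdRoot i j) q = q i - q j := by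
  simp [dotR, stdRoot, stdE, sub_mul, Finset.sum_sub_distrib]

theorem sum_stdRoot_mul (i j : Fin n) (f : Fin n → ℂ) :
    ∑ k, (stdRoot i j k : ℂ) * f k = f i - f j := by
  simp only [stdRoot, stdE, Pi.sub_apply, Complex.ofReal_sub, apply_ite Complex.ofReal]
  simp [sub_mul, Finset.sum_sub_distrib]

theorem notMem_Phi_of_one_lt_abs {x : Fin n → ℝ} (k : Fin n) (h : 1 < |x k|) : x ∉ Phi n := by
  rintro ⟨i, j, -, rfl⟩
  simp only [Pi.sub_apply, stdE] at h
  split_ifs at h <;> norm_num at h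

end Roots

section StructureConstants

variable {n : ℕ}

theorem max_stdRoot_zero {i j : Fin n} (h : i ≠ j) (k : Fin n) :
    max (stdRoot i j k) 0 = stdE i k := by
  by_cases hi : k = i <;> by_cases hj : k = j <;> simp_all [stdRoot, stdE]

theorem max_neg_stdRoot_zero {i j : Fin n} (h : i ≠ j) (k : Fin n) :
    max (-stdRoot i j k) 0 = stdE j k := by
  rw [← Pi.neg_apply, neg_stdRoot, max_stdRoot_zero h.symm]

theorem sum_stdE_mul_stdE (j k : Fin n) :
    ∑ m, stdE j m * stdE k m = if j = k then 1 else 0 := by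
  simp [stdE, eq_comm]

theorem cst_stdRoot_stdRoot {i j k l : Fin n} (hij : i ≠ j) (hkl : k ≠ l)
    (h : stdRoot i j + stdRoot k l ∈ Phi n) :
    cst (stdRoot i j) (stdRoot k l) = (if j = k then 1 else 0) - (if i = l then 1 else 0) := by
  rw [cst, if_pos ⟨stdRoot_mem_Phi hij, stdRoot_mem_Phi hkl, h⟩]
  simp only [max_stdRoot_zero hij, max_neg_stdRoot_zero hij, max_stdRoot_zero hkl,
    max_neg_stdRoot_zero hkl, sum_stdE_mul_stdE]

theorem cst_stdRoot_stdRoot_eq_one {i j k : Fin n} (hij : i ≠ j) (hjk : j ≠ k) (hik : i ≠ k) :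
    cst (stdRoot i j) (stdRoot j k) = 1 := by
  rw [cst_stdRoot_stdRoot hij hjk (by rw [stdRoot_add_stdRoot]; exact stdRoot_mem_Phi hik)]
  simp [hik]

theorem cst_stdRoot_stdRoot_eq_neg_one {i j k : Fin n} (hij : i ≠ j) (hjk : j ≠ k) (hik : i ≠ k) :
    cst (stdRoot i j) (stdRoot k i) = -1 := by
  rw [cst_stdRoot_stdRoot hij hik.symm
    (by rw [add_comm, stdRoot_add_stdRoot]; exact stdRoot_mem_Phi hjk.symm)]
  simp [hjk]

theorem cst_eq_zero_of_one_lt_abs {α γ : Fin n → ℝ} (k : Fin n) (h : 1 < |γ k|) :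
    cst α γ = 0 :=
  if_neg fun hmem => notMem_Phi_of_one_lt_abs k h hmem.2.1

end StructureConstants

theorem deriv_neg_eq_of_odd_on {𝕜 F : Type*} [NontriviallyNormedField 𝕜] [NormedAddCommGroup F]
    [NormedSpace 𝕜 F] {w : 𝕜 → F} {D : Set 𝕜} (hD : IsOpen D)
    (hodd : ∀ x ∈ D, w (-x) = -w x) {x : 𝕜} (hx : x ∈ D) :
    deriv w (-x) = deriv w x := by
  have hloc : (fun y => w (-y)) =ᶠ[nhds x] fun y => -w y := by
    filter_upwards [hD.mem_nhds hx] with y hy using hodd y hy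
  have := hloc.deriv_eq
  rwa [deriv_comp_neg, deriv.fun_neg, neg_inj] at this

section StructureEquations

variable {n : ℕ} {w : ℝ → ℂ} {q : Fin n → ℝ} {η : ℂ} {Rsame Ropp : (Fin n → ℝ) → ℂ}

theorem two_mul_eta_add_Rsame_add_Rsame_neg_eq_zero
    (hwne : ∀ α ∈ Phi n, w (dotR α q) ≠ 0)
    (hwodd : ∀ α ∈ Phi n, w (dotR (-α) q) = -w (dotR α q))
    (hw' : ∀ α ∈ Phi n, deriv w (dotR (-α) q) = deriv w (dotR α q))
    (ha : ∀ α ∈ Phi n, Ropp α + Ropp (-α) = 0)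
    (hb : ∀ α ∈ Phi n, -(deriv w (dotR α q)) =
      η * w (dotR α q) + Ropp (-α) * w (dotR α q) - Rsame α * w (dotR (-α) q))
    {α : Fin n → ℝ} (hα : α ∈ Phi n) :
    2 * η + (Rsame α + Rsame (-α)) = 0 := by
  have hpos := hb α hα
  have hneg := hb (-α) (neg_mem_Phi hα)
  rw [neg_neg, hw' α hα, hwodd α hα] at hneg
  rw [hwodd α hα] at hpos
  refine mul_right_cancel₀ (hwne α hα) ?_
  linear_combination hneg - hpos - w (dotR α q) * ha α hα

theorem eta_eq_zero_of_three_distinct {RhR : Fin n → (Fin n → ℝ) → ℂ} {a b c : Fin n}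
    (hab : a ≠ b) (hac : a ≠ c) (hbc : b ≠ c)
    (hwne : w (q b - q c) ≠ 0)
    (hwodd : ∀ α ∈ Phi n, w (dotR (-α) q) = -w (dotR α q))
    (ha : ∀ α ∈ Phi n, Ropp α + Ropp (-α) = 0)
    (hη : ∀ α ∈ Phi n, 2 * η + (Rsame α + Rsame (-α)) = 0)
    (hc : ∀ α ∈ Phi n, ∀ β ∈ Phi n, α ≠ β → α ≠ -β →
      (∑ i, (α i : ℂ) * RhR i β) * w (dotR α q) - (∑ i, (β i : ℂ) * RhR i α) * w (dotR β q) =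
        (cst α (β - α) : ℂ) * (Rsame α * w (dotR (β - α) q) - Rsame β * w (dotR (α - β) q))
          + (cst (-α) (β + α) : ℂ) *
              (Ropp (-α) * w (dotR (β + α) q) + Ropp (-β) * w (dotR (β + α) q))) :
    η = 0 := by
  have hab' := stdRoot_mem_Phi hab
  have hac' := stdRoot_mem_Phi hac
  have hba' := stdRoot_mem_Phi hab.symm
  have hca' := stdRoot_mem_Phi hac.symm
  have E₁ := hc _ hab' _ hac' (stdRoot_ne_of_ne_right hab hbc)
    (by rw [neg_stdRoot]; exact stdRoot_ne_of_ne_left hab hac)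
  have E₂ := hc _ hba' _ hca' (stdRoot_ne_of_ne_left hab.symm hbc)
    (by rw [neg_stdRoot]; exact stdRoot_ne_of_ne_left hab.symm hab.symm)
  have E₃ := hc _ hab' _ hca' (stdRoot_ne_of_ne_left hab hac)
    (by rw [neg_stdRoot]; exact stdRoot_ne_of_ne_right hab hbc)
  have E₄ := hc _ hac' _ hba' (stdRoot_ne_of_ne_left hac hab)
    (by rw [neg_stdRoot]; exact stdRoot_ne_of_ne_right hac hbc.symm)
  have z₁ : cst (stdRoot b a) (stdRoot a c + stdRoot a b) = 0 :=
    cst_eq_zero_of_one_lt_abs a (by simp [stdRoot, stdE, hab, hac]; norm_num)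
  have z₂ : cst (stdRoot a b) (stdRoot c a + stdRoot b a) = 0 :=
    cst_eq_zero_of_one_lt_abs a (by simp [stdRoot, stdE, hab, hac]; norm_num)
  have z₃ : cst (stdRoot a b) (stdRoot c a - stdRoot a b) = 0 :=
    cst_eq_zero_of_one_lt_abs a (by simp [stdRoot, stdE, hab, hac]; norm_num)
  have z₄ : cst (stdRoot a c) (stdRoot b a - stdRoot a c) = 0 :=
    cst_eq_zero_of_one_lt_abs a (by simp [stdRoot, stdE, hab, hac]; norm_num)
  simp only [neg_stdRoot, stdRoot_sub_stdRoot_left, stdRoot_sub_stdRoot_right,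
    stdRoot_add_stdRoot, z₁, z₂, z₃, z₄, cst_stdRoot_stdRoot_eq_one hab hbc hac,
    cst_stdRoot_stdRoot_eq_neg_one hab.symm hac hbc,
    cst_stdRoot_stdRoot_eq_neg_one hac.symm hab hbc.symm,
    sum_stdRoot_mul, dotR_stdRoot] at E₁ E₂ E₃ E₄
  have hodd : ∀ i j, i ≠ j → w (q j - q i) = -w (q i - q j) := fun i j hij => by
    simpa only [neg_stdRoot, dotR_stdRoot] using hwodd _ (stdRoot_mem_Phi hij)
  simp only [hodd a b hab, hodd a c hac, hodd b c hbc] at E₁ E₂ E₃ E₄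
  have hηab := hη _ hab'
  have hηac := hη _ hac'
  have haab := ha _ hab'
  have haac := ha _ hac'
  simp only [neg_stdRoot] at hηab hηac haab haac
  push_cast at E₁ E₂ E₃ E₄
  have : η * w (q b - q c) = 0 := by
    linear_combination (E₁ + E₂ - E₃ + E₄) / 4
      + w (q b - q c) / 4 * (hηab + hηac - haab - haac)
  exact (mul_eq_zero.mp this).resolve_right hwne

end StructureEquations

theorem statement2_general
    (n : ℕ) (hn : 3 ≤ n)
    (D : Set ℝ) (hDopen : IsOpen D)
    (w : ℝ → ℂ) (hwne : ∀ x ∈ D, w x ≠ 0)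
    (hwodd : ∀ x ∈ D, w (-x) = -w x)
    (U : Set (Fin n → ℝ))
    (hUD : ∀ q ∈ U, ∀ α ∈ Phi n, dotR α q ∈ D)
    (η : (Fin n → ℝ) → ℂ)
    (RhR : Fin n → (Fin n → ℝ) → (Fin n → ℝ) → ℂ)
    (Rsame Ropp : (Fin n → ℝ) → (Fin n → ℝ) → ℂ)
    (ha : ∀ q ∈ U, ∀ α ∈ Phi n, Ropp α q + Ropp (-α) q = 0)
    (hb : ∀ q ∈ U, ∀ α ∈ Phi n,
      -(deriv w (dotR α q)) =
        η q * w (dotR α q) + Ropp (-α) q * w (dotR α q)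
          - Rsame α q * w (dotR (-α) q))
    (hc : ∀ q ∈ U, ∀ α ∈ Phi n, ∀ β ∈ Phi n, α ≠ β → α ≠ -β →
      (∑ i, (α i : ℂ) * RhR i β q) * w (dotR α q)
          - (∑ i, (β i : ℂ) * RhR i α q) * w (dotR β q) =
        (cst α (β - α) : ℂ) *
            (Rsame α q * w (dotR (β - α) q) - Rsame β q * w (dotR (α - β) q))
          + (cst (-α) (β + α) : ℂ) *
              (Ropp (-α) q * w (dotR (β + α) q) + Ropp (-β) q * w (dotR (β + α) q))) :
    ∀ q ∈ U,
      (∀ α ∈ Phi n, η q = -(1/2) * (Rsame α q + Rsame (-α) q)) ∧ η q = 0 := by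
  intro q hq
  have hodd : ∀ α ∈ Phi n, w (dotR (-α) q) = -w (dotR α q) := fun α hα => by
    rw [dotR_neg]
    exact hwodd _ (hUD q hq α hα)
  have hderiv : ∀ α ∈ Phi n, deriv w (dotR (-α) q) = deriv w (dotR α q) := fun α hα => by
    rw [dotR_neg]
    exact deriv_neg_eq_of_odd_on hDopen hwodd (hUD q hq α hα)
  have hη : ∀ α ∈ Phi n, 2 * η q + (Rsame α q + Rsame (-α) q) = 0 := fun α hα =>
    two_mul_eta_add_Rsame_add_Rsame_neg_eq_zero (fun β hβ => hwne _ (hUD q hq β hβ)) hodd hderiv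
      (ha q hq) (hb q hq) hα
  refine ⟨fun α hα => by linear_combination hη α hα / 2, ?_⟩
  let a : Fin n := ⟨0, by omega⟩
  let b : Fin n := ⟨1, by omega⟩
  let c : Fin n := ⟨2, by omega⟩
  have hbc : b ≠ c := by simp [b, c, Fin.ext_iff]
  refine eta_eq_zero_of_three_distinct (a := a) (by simp [a, b, Fin.ext_iff])
    (by simp [a, c, Fin.ext_iff]) hbc ?_ hodd (ha q hq) hη (hc q hq)
  simpa only [dotR_stdRoot] using hwne _ (hUD q hq _ (stdRoot_mem_Phi hbc))

/-- Under momentum independence, `η = −(1/2)(R^{αα} + R^{−α,−α})` and `η = 0`. -/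
theorem statement2
    (n : ℕ) (hn : 3 ≤ n)
    (D : Set ℝ) (hDopen : IsOpen D) (hD0 : (0:ℝ) ∉ D) (hDsymm : ∀ x ∈ D, -x ∈ D)
    (w : ℝ → ℂ) (hw : ContDiffOn ℝ 2 w D) (hwne : ∀ x ∈ D, w x ≠ 0)
    (hwodd : ∀ x ∈ D, w (-x) = -w x)
    (U : Set (Fin n → ℝ)) (hUne : U.Nonempty) (hUconv : Convex ℝ U)
    (hUopen : IsOpen U) (hUD : ∀ q ∈ U, ∀ α ∈ Phi n, dotR α q ∈ D)
    (η : (Fin n → ℝ) → ℂ)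
    (RhR : Fin n → (Fin n → ℝ) → (Fin n → ℝ) → ℂ)
    (Rsame Ropp : (Fin n → ℝ) → (Fin n → ℝ) → ℂ)
    (ha : ∀ q ∈ U, ∀ α ∈ Phi n, Ropp α q + Ropp (-α) q = 0)
    (hb : ∀ q ∈ U, ∀ α ∈ Phi n,
      -(deriv w (dotR α q)) =
        η q * w (dotR α q) + Ropp (-α) q * w (dotR α q)
          - Rsame α q * w (dotR (-α) q))
    (hc : ∀ q ∈ U, ∀ α ∈ Phi n, ∀ β ∈ Phi n, α ≠ β → α ≠ -β →
      (∑ i, (α i : ℂ) * RhR i β q) * w (dotR α q)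
          - (∑ i, (β i : ℂ) * RhR i α q) * w (dotR β q) =
        (cst α (β - α) : ℂ) *
            (Rsame α q * w (dotR (β - α) q) - Rsame β q * w (dotR (α - β) q))
          + (cst (-α) (β + α) : ℂ) *
              (Ropp (-α) q * w (dotR (β + α) q) + Ropp (-β) q * w (dotR (β + α) q))) :
    ∀ q ∈ U,
      (∀ α ∈ Phi n, η q = -(1/2) * (Rsame α q + Rsame (-α) q)) ∧ η q = 0 :=
  statement2_general n hn D hDopen w hwne hwodd U hUD η RhR Rsame Ropp ha hb hc

end
end

section
/- For all a, b, u, v ∈ ℂ such that a, b, a+b, u, v, u−v, u−a, v−b, u−v−a, v−u−b, u−a−b, v−a−b ∉ Λ, the following identity holds: w(a;u−v) · e^{−(ζ(u−v) − ζ(u) + ζ(v)) a} · w(a+b;v) + w(b;v−u) · e^{−(ζ(v−u) − ζ(v) + ζ(u)) b} · w(a+b;u) = w(a;u) · w(b;v). -/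
open scoped Classical

noncomputable section

/-- The rank-2 lattice `Λ = ℤω₁ + ℤω₂ ⊂ ℂ`. -/
def LatticeOf (ω₁ ω₂ : ℂ) : Set ℂ :=
  {z | ∃ m l : ℤ, z = (m : ℂ) * ω₁ + (l : ℂ) * ω₂}

/-- Krichever's function `w(x;u) = σ(u−x) e^{ζ(u)x} / (σ(u)σ(x))`. -/
def wK (sig zet : ℂ → ℂ) (x u : ℂ) : ℂ :=
  sig (u - x) * Complex.exp (zet u * x) / (sig u * sig x)

/-!
Write `w(x;u) = r(x;u) e^{ζ(u)x}` with `r(x;u) = σ(u-x)/(σ(u)σ(x))`. In each of the three products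
the exponentials combine to `e^{ζ(u)a + ζ(v)b}`, so the identity is the three-term relation
`σ(u-v-a)σ(v-a-b)σ(u)σ(b) - σ(v-u-b)σ(u-a-b)σ(v)σ(a) = σ(a+b)σ(v-b) · σ(u-a)σ(u-v)`.

For `a, v, a - v ∉ Λ`, both sides are, as functions of `u`, entire with the same multiplier under
`Λ`, because `σ(z + l) = c e^{ηz} σ(z)` with `c² = e^{ηl}`. The left side vanishes at `u ≡ a` and
`u ≡ v`, the simple zeros of `σ(u-a)σ(u-v)`, so the quotient is an entire elliptic function, hence
constant by Liouville; `u = a + v` gives the constant. Continuity removes the restriction on `a, v`.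
The parity and quasi-periodicity of `σ` used here follow from the characterisation of `℘, ζ, σ`:
functions with equal (logarithmic) derivatives on the connected set `ℂ \ Λ` differ by a constant
(factor), and the normalisations at `0` fix it.
-/

open Filter Topology Function

lemma tendsto_neg_nhdsNE_zero : Tendsto (fun z : ℂ => -z) (𝓝[≠] 0) (𝓝[≠] 0) := by
  have := Filter.neg_nhdsNE (a := (0 : ℂ))
  rw [neg_zero] at this
  exact this.le

lemma exists_differentiable_eq_mul_of_simple_zeros {N D : ℂ → ℂ} (hN : Differentiable ℂ N)
    (hD : Differentiable ℂ D) (hzero : ∀ z, D z = 0 → N z = 0 ∧ deriv D z ≠ 0) :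
    ∃ G : ℂ → ℂ, Differentiable ℂ G ∧ ∀ z, N z = G z * D z := by
  refine ⟨fun z => if D z = 0 then deriv N z / deriv D z else N z / D z, fun z₀ => ?_,
    fun z => ?_⟩
  · by_cases hz₀ : D z₀ = 0
    · obtain ⟨hN₀, hD₀⟩ := hzero z₀ hz₀
      have hne : ∀ᶠ z in 𝓝 z₀, z ≠ z₀ → D z ≠ 0 := by
        simpa [hz₀, eventually_nhdsWithin_iff] using (hD z₀).hasDerivAt.eventually_ne hD₀
      have hslope (f : ℂ → ℂ) (hf : Differentiable ℂ f) : Differentiable ℂ (dslope f z₀) :=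
        differentiableOn_univ.1 ((Complex.differentiableOn_dslope univ_mem).2 hf.differentiableOn)
      -- near `z₀`, `N / D = dslope N z₀ / dslope D z₀`, whose value at `z₀` is `N'(z₀) / D'(z₀)`
      refine ((hslope N hN z₀).div (hslope D hD z₀) (by simpa using hD₀)).congr_of_eventuallyEq ?_
      filter_upwards [hne] with z hz
      rcases eq_or_ne z z₀ with rfl | hzz₀
      · simp [hz₀]
      · simp [hz hzz₀, dslope_of_ne _ hzz₀, slope_def_field, hN₀, hz₀,
          div_div_div_cancel_right₀ (sub_ne_zero.2 hzz₀)]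
    · refine ((hN z₀).div (hD z₀) hz₀).congr_of_eventuallyEq ?_
      filter_upwards [(hD z₀).continuousAt.eventually_ne hz₀] with z hz
      simp [hz]
  · by_cases hz : D z = 0
    · simp [hz, (hzero z hz).1]
    · simp [hz]

lemma dense_setOf_ne_zero_of_simple_zeros {D : ℂ → ℂ} (hD : Differentiable ℂ D)
    (hzero : ∀ z, D z = 0 → deriv D z ≠ 0) : Dense {z | D z ≠ 0} := by
  refine fun z => mem_closure_iff_frequently.2 ?_
  by_cases hz : D z = 0
  · simpa [hz] using ((hD z).hasDerivAt.eventually_ne (hzero z hz)).frequently.filter_mono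
      nhdsWithin_le_nhds
  · exact ((hD z).continuousAt.eventually_ne hz).frequently

lemma latticeOf_eq_lattice (L : PeriodPair) : LatticeOf L.ω₁ L.ω₂ = L.lattice := by
  ext z
  simp [LatticeOf, PeriodPair.mem_lattice, eq_comm]

namespace PeriodPair

variable (L : PeriodPair)

lemma countable_lattice : (L.lattice : Set ℂ).Countable := by
  have : Countable L.lattice := L.latticeEquivProd.injective.countable
  exact Set.countable_coe_iff.1 this

lemma isOpen_compl_lattice : IsOpen (L.lattice : Set ℂ)ᶜ := L.isClosed_lattice.isOpen_compl

lemma isPreconnected_compl_lattice : IsPreconnected (L.lattice : Set ℂ)ᶜ :=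
  (L.countable_lattice.isConnected_compl_of_one_lt_rank (by simp)).isPreconnected

lemma eventually_notMem_lattice_nhdsNE (z : ℂ) : ∀ᶠ w in 𝓝[≠] z, w ∉ L.lattice := by
  filter_upwards [nhdsWithin_le_nhds (L.compl_lattice_sdiff_singleton_mem_nhds z),
    self_mem_nhdsWithin] with w hw hwz
  simp_all

lemma dense_setOf_notMem_lattice_and_sub (x : ℂ) :
    Dense {z | z ∉ L.lattice ∧ z - x ∉ L.lattice} := by
  have hcount : {z | z ∈ L.lattice ∨ z - x ∈ L.lattice}.Countable :=
    L.countable_lattice.union (L.countable_lattice.preimage (sub_left_injective))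
  simpa [Set.compl_ofPred, not_or] using hcount.dense_compl ℂ

variable {L} {α : Type*} {f g k : ℂ → ℂ}

lemma neg_notMem_lattice {z : ℂ} (hz : z ∉ L.lattice) : -z ∉ L.lattice := by
  rwa [neg_mem_iff]

lemma periodic_of_mem_lattice {f : ℂ → α} (h₁ : Periodic f L.ω₁) (h₂ : Periodic f L.ω₂)
    {l : ℂ} (hl : l ∈ L.lattice) : Periodic f l := by
  obtain ⟨m, n, rfl⟩ := mem_lattice.1 hl
  exact (h₁.int_mul m).add_period (h₂.int_mul n)

lemma eq_of_forall_notMem_eq_of_tendsto {a c : ℂ} (hf : ∀ z ∉ L.lattice, f z = a)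
    (hlim : Tendsto f (𝓝[≠] 0) (𝓝 c)) : a = c :=
  tendsto_nhds_unique (tendsto_const_nhds.congr' <| by
    filter_upwards [L.eventually_notMem_lattice_nhdsNE 0] with z hz using (hf z hz).symm) hlim

theorem apply_eq_apply_of_differentiable_of_periodic (hf : Differentiable ℂ f)
    (hper : ∀ l ∈ L.lattice, Periodic f l) (z w : ℂ) : f z = f w :=
  hf.apply_eq_apply_of_bounded (IsZLattice.isCompact_range_of_periodic L.lattice f
    hf.continuous fun z l hl => hper l hl z).isBounded z w

theorem eq_of_periodic_of_tendsto {c : ℂ} (hf : DifferentiableOn ℂ f (L.lattice : Set ℂ)ᶜ)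
    (hper : ∀ l ∈ L.lattice, Periodic f l) (hlim : Tendsto f (𝓝[≠] 0) (𝓝 c)) {z : ℂ}
    (hz : z ∉ L.lattice) : f z = c := by
  set g : ℂ → ℂ := fun z => if z ∈ L.lattice then c else f z
  have hg_off {z : ℂ} (hz : z ∉ L.lattice) : DifferentiableAt ℂ g z :=
    (hf.differentiableAt (L.isOpen_compl_lattice.mem_nhds hz)).congr_of_eventuallyEq <| by
      filter_upwards [L.isOpen_compl_lattice.mem_nhds hz] with w hw
      simp [g, show w ∉ L.lattice from hw]
  have hg_zero : DifferentiableAt ℂ g 0 := by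
    refine (Complex.analyticAt_of_differentiable_on_punctured_nhds_of_continuousAt ?_ ?_)
      |>.differentiableAt
    · filter_upwards [L.eventually_notMem_lattice_nhdsNE 0] with w hw using hg_off hw
    · rw [← continuousWithinAt_compl_self, ContinuousWithinAt]
      simp only [g, zero_mem, if_true]
      refine hlim.congr' ?_
      filter_upwards [L.eventually_notMem_lattice_nhdsNE 0] with w hw
      simp [hw]
  have hg_per (l : ℂ) (hl : l ∈ L.lattice) : Periodic g l := fun w => by
    simp only [g, L.lattice.add_mem_iff_left hl, hper l hl w]
  have hg : Differentiable ℂ g := fun w => by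
    by_cases hw : w ∈ L.lattice
    · have h₀ : DifferentiableAt ℂ g (w - w) := by rwa [sub_self]
      simpa [comp_def, (hg_per w hw).sub_eq] using
        h₀.comp (f := fun y => y - w) w (differentiableAt_id.sub_const w)
    · exact hg_off hw
  simpa [g, hz] using L.apply_eq_apply_of_differentiable_of_periodic hg hg_per z 0

lemma exists_eq_add_of_hasDerivAt (hf : ∀ z ∉ L.lattice, HasDerivAt f (k z) z)
    (hg : ∀ z ∉ L.lattice, HasDerivAt g (k z) z) : ∃ a, ∀ z ∉ L.lattice, f z = g z + a := by
  obtain ⟨a, ha⟩ := L.isOpen_compl_lattice.exists_eq_add_of_deriv_eq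
    L.isPreconnected_compl_lattice (fun z hz => (hf z hz).differentiableAt.differentiableWithinAt)
    (fun z hz => (hg z hz).differentiableAt.differentiableWithinAt)
    (fun z hz => by simp [(hf z hz).deriv, (hg z hz).deriv])
  exact ⟨a, fun z hz => ha hz⟩

lemma exists_eq_const_mul_of_hasDerivAt (hf : ∀ z ∉ L.lattice, HasDerivAt f (k z * f z) z)
    (hg : ∀ z ∉ L.lattice, HasDerivAt g (k z * g z) z) (hf₀ : ∀ z ∉ L.lattice, f z ≠ 0)
    (hg₀ : ∀ z ∉ L.lattice, g z ≠ 0) : ∃ c ≠ 0, ∀ z ∉ L.lattice, f z = c * g z := by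
  obtain ⟨c, hc, hfg⟩ := (logDeriv_eqOn_iff
    (fun z hz => (hf z hz).differentiableAt.differentiableWithinAt)
    (fun z hz => (hg z hz).differentiableAt.differentiableWithinAt)
    L.isOpen_compl_lattice L.isPreconnected_compl_lattice hg₀ hf₀).1 fun z hz => by
      simp [logDeriv_apply, (hf z hz).deriv, (hg z hz).deriv, hf₀ z hz, hg₀ z hz]
  exact ⟨c, hc, fun z hz => hfg hz⟩

theorem exists_eq_const_mul_of_quasiPeriodic {N D : ℂ → ℂ} (hN : Differentiable ℂ N)
    (hD : Differentiable ℂ D) (hzero : ∀ z, D z = 0 → N z = 0 ∧ deriv D z ≠ 0)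
    (hquasi : ∀ l ∈ L.lattice, ∃ e : ℂ → ℂ,
      ∀ z, e z ≠ 0 ∧ N (z + l) = e z * N z ∧ D (z + l) = e z * D z) :
    ∃ c, ∀ z, N z = c * D z := by
  obtain ⟨G, hG, hNG⟩ := exists_differentiable_eq_mul_of_simple_zeros hN hD hzero
  have hper (l : ℂ) (hl : l ∈ L.lattice) : Periodic G l := by
    obtain ⟨e, he⟩ := hquasi l hl
    refine congrFun <| Continuous.ext_on
      (dense_setOf_ne_zero_of_simple_zeros hD fun z hz => (hzero z hz).2)
      (hG.continuous.comp (continuous_add_const l)) hG.continuous fun z (hz : D z ≠ 0) => ?_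
    obtain ⟨he₀, hNl, hDl⟩ := he z
    refine mul_right_cancel₀ (show D (z + l) ≠ 0 by rw [hDl]; exact mul_ne_zero he₀ hz) ?_
    rw [← hNG, hNl, hNG, hDl]
    ring
  exact ⟨G 0, fun z => by rw [hNG, L.apply_eq_apply_of_differentiable_of_periodic hG hper z 0]⟩

end PeriodPair

structure IsWeierstrassP (L : PeriodPair) (pe : ℂ → ℂ) : Prop where
  differentiableOn : DifferentiableOn ℂ pe (L.lattice : Set ℂ)ᶜ
  periodic_ω₁ : Periodic pe L.ω₁
  periodic_ω₂ : Periodic pe L.ω₂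
  tendsto_sub_one_div_sq : Tendsto (fun z => pe z - 1 / z ^ 2) (𝓝[≠] 0) (𝓝 0)

structure IsWeierstrassZeta (L : PeriodPair) (pe zet : ℂ → ℂ) : Prop where
  hasDerivAt : ∀ z ∉ L.lattice, HasDerivAt zet (-pe z) z
  tendsto_sub_one_div : Tendsto (fun z => zet z - 1 / z) (𝓝[≠] 0) (𝓝 0)

structure IsWeierstrassSigma (L : PeriodPair) (zet sig : ℂ → ℂ) : Prop where
  differentiable : Differentiable ℂ sig
  eq_zero_iff : ∀ z, sig z = 0 ↔ z ∈ L.lattice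
  hasDerivAt : ∀ z ∉ L.lattice, HasDerivAt sig (zet z * sig z) z
  tendsto_div : Tendsto (fun z => sig z / z) (𝓝[≠] 0) (𝓝 1)

variable {L : PeriodPair} {pe zet sig : ℂ → ℂ}

namespace IsWeierstrassP

variable (h℘ : IsWeierstrassP L pe)
include h℘

lemma periodic {l : ℂ} (hl : l ∈ L.lattice) : Periodic pe l :=
  L.periodic_of_mem_lattice h℘.periodic_ω₁ h℘.periodic_ω₂ hl

lemma neg {z : ℂ} (hz : z ∉ L.lattice) : pe (-z) = pe z := by
  refine (sub_eq_zero.1 <|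
    L.eq_of_periodic_of_tendsto (f := fun z => pe z - pe (-z)) ?_ ?_ ?_ hz).symm
  · exact h℘.differentiableOn.sub (h℘.differentiableOn.comp (differentiableOn_neg _)
      fun z hz => L.neg_notMem_lattice hz)
  · intro l hl z
    simp only [neg_add, ← sub_eq_add_neg, h℘.periodic hl z, (h℘.periodic hl).sub_eq]
  · have := h℘.tendsto_sub_one_div_sq.sub
      (h℘.tendsto_sub_one_div_sq.comp tendsto_neg_nhdsNE_zero)
    refine (sub_zero (0 : ℂ) ▸ this).congr fun z => ?_
    simp only [comp_apply, neg_sq]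
    ring

end IsWeierstrassP

lemma IsWeierstrassZeta.neg (hζ : IsWeierstrassZeta L pe zet) (h℘ : IsWeierstrassP L pe)
    {z : ℂ} (hz : z ∉ L.lattice) : zet (-z) = -zet z := by
  obtain ⟨a, ha⟩ := L.exists_eq_add_of_hasDerivAt (f := fun z => zet (-z)) (g := fun z => -zet z)
    (k := pe) (fun z hz => ((hζ.hasDerivAt _ (L.neg_notMem_lattice hz)).comp z
      (hasDerivAt_neg z)).congr_deriv (by simp [h℘.neg hz]))
    (fun z hz => (hζ.hasDerivAt z hz).neg.congr_deriv (neg_neg _))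
  have ha₀ : a = 0 := by
    refine L.eq_of_forall_notMem_eq_of_tendsto (f := fun z => zet z + zet (-z))
      (fun z hz => by simp [ha z hz]) ?_
    have := hζ.tendsto_sub_one_div.add (hζ.tendsto_sub_one_div.comp tendsto_neg_nhdsNE_zero)
    refine (add_zero (0 : ℂ) ▸ this).congr fun z => ?_
    simp only [comp_apply, div_neg]
    ring
  simpa [ha₀] using ha z hz

namespace IsWeierstrassSigma

variable (hσ : IsWeierstrassSigma L zet sig)
include hσ

lemma ne_zero {z : ℂ} (hz : z ∉ L.lattice) : sig z ≠ 0 := mt (hσ.eq_zero_iff z).1 hz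

lemma apply_of_mem {l : ℂ} (hl : l ∈ L.lattice) : sig l = 0 := (hσ.eq_zero_iff l).2 hl

lemma hasDerivAt_zero : HasDerivAt sig 1 0 := by
  rw [hasDerivAt_iff_tendsto_slope]
  exact hσ.tendsto_div.congr fun z => by simp [slope_def_field, hσ.apply_of_mem (zero_mem _)]

lemma neg (hζ : IsWeierstrassZeta L pe zet) (h℘ : IsWeierstrassP L pe) (z : ℂ) :
    sig (-z) = -sig z := by
  obtain ⟨c, -, hc⟩ := L.exists_eq_const_mul_of_hasDerivAt (f := fun z => sig (-z)) (k := zet)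
    (fun z hz => ((hσ.hasDerivAt _ (L.neg_notMem_lattice hz)).comp z
      (hasDerivAt_neg z)).congr_deriv (by simp [hζ.neg h℘ hz]))
    hσ.hasDerivAt (fun z hz => hσ.ne_zero (L.neg_notMem_lattice hz)) (fun z hz => hσ.ne_zero hz)
  have hc₁ : c = -1 := by
    refine L.eq_of_forall_notMem_eq_of_tendsto (f := fun z => sig (-z) / sig z)
      (fun z hz => by simp [hc z hz, hσ.ne_zero hz]) ?_
    have := ((hσ.tendsto_div.comp tendsto_neg_nhdsNE_zero).div hσ.tendsto_div one_ne_zero).neg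
    refine (by norm_num : -(1 / 1 : ℂ) = -1) ▸ this.congr' ?_
    filter_upwards [self_mem_nhdsWithin] with z (hz : z ≠ 0)
    simp only [Pi.div_apply, comp_apply, div_neg, neg_div, neg_neg,
      div_div_div_cancel_right₀ hz]
  by_cases hz : z ∈ L.lattice
  · simp [hσ.apply_of_mem hz, hσ.apply_of_mem (neg_mem hz)]
  · simp [hc z hz, hc₁]

lemma exists_apply_add_eq (hζ : IsWeierstrassZeta L pe zet) (h℘ : IsWeierstrassP L pe) {l : ℂ}
    (hl : l ∈ L.lattice) :
    ∃ c η : ℂ, c ^ 2 = Complex.exp (η * l) ∧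
      ∀ z, sig (z + l) = c * Complex.exp (η * z) * sig z := by
  have hl' {z : ℂ} (hz : z ∉ L.lattice) : z + l ∉ L.lattice := by
    rwa [L.lattice.add_mem_iff_left hl]
  obtain ⟨η, hη⟩ := L.exists_eq_add_of_hasDerivAt (f := fun z => zet (z + l)) (k := fun z => -pe z)
    (fun z hz => ((hζ.hasDerivAt _ (hl' hz)).comp_add_const z l).congr_deriv
      (by rw [h℘.periodic hl z])) hζ.hasDerivAt
  obtain ⟨c, -, hc⟩ := L.exists_eq_const_mul_of_hasDerivAt (f := fun z => sig (z + l))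
    (g := fun z => Complex.exp (η * z) * sig z) (k := fun z => zet z + η)
    (fun z hz => ((hσ.hasDerivAt _ (hl' hz)).comp_add_const z l).congr_deriv
      (by rw [hη z hz]))
    (fun z hz => ((((hasDerivAt_id z).const_mul η).cexp).mul (hσ.hasDerivAt z hz)).congr_deriv
      (by simp only [id, mul_one]; ring))
    (fun z hz => hσ.ne_zero (hl' hz))
    (fun z hz => mul_ne_zero (Complex.exp_ne_zero _) (hσ.ne_zero hz))
  have hall (z : ℂ) : sig (z + l) = c * Complex.exp (η * z) * sig z := by
    by_cases hz : z ∈ L.lattice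
    · simp [hσ.apply_of_mem hz, hσ.apply_of_mem (add_mem hz hl)]
    · rw [hc z hz, mul_assoc]
  refine ⟨c, η, ?_, hall⟩
  -- at `z = ω₁/2 ∉ Λ` (any point off `Λ` would do), `σ(-z) = σ((-z - l) + l)` and oddness give
  -- `c² e^{-ηl} σ(z) = σ(z)`
  have hz := L.ω₁_div_two_notMem_lattice
  have h := hall (-(L.ω₁ / 2) - l)
  rw [sub_add_cancel, hσ.neg hζ h℘, show -(L.ω₁ / 2) - l = -(L.ω₁ / 2 + l) by ring,
    hσ.neg hζ h℘, hall] at h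
  have hexp : Complex.exp (η * -(L.ω₁ / 2 + l)) * Complex.exp (η * (L.ω₁ / 2)) *
      Complex.exp (η * l) = 1 := by
    rw [← Complex.exp_add, ← Complex.exp_add, ← Complex.exp_zero]; ring_nf
  have hσ₀ := hσ.ne_zero hz
  apply mul_right_cancel₀ hσ₀
  linear_combination Complex.exp (η * l) * h - c ^ 2 * sig (L.ω₁ / 2) * hexp

lemma deriv_ne_zero_of_mem (hζ : IsWeierstrassZeta L pe zet) (h℘ : IsWeierstrassP L pe) {l : ℂ}
    (hl : l ∈ L.lattice) : deriv sig l ≠ 0 := by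
  obtain ⟨c, η, hc, hall⟩ := hσ.exists_apply_add_eq hζ h℘ hl
  have h₁ : HasDerivAt (fun z => sig (z + l)) (deriv sig l) 0 := by
    simpa using (hσ.differentiable (0 + l)).hasDerivAt.comp_add_const 0 l
  have h₂ : HasDerivAt (fun z => c * Complex.exp (η * z) * sig z) c 0 :=
    ((((hasDerivAt_id 0).const_mul η).cexp).const_mul c).mul hσ.hasDerivAt_zero
      |>.congr_deriv (by simp [hσ.apply_of_mem (zero_mem _)])
  simp only [hall] at h₁
  rw [h₁.unique h₂]
  exact ne_zero_pow two_ne_zero (hc ▸ Complex.exp_ne_zero _)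

lemma exists_multiplier (hζ : IsWeierstrassZeta L pe zet) (h℘ : IsWeierstrassP L pe)
    {l : ℂ} (hl : l ∈ L.lattice) : ∃ m : ℂ → ℂ, (∀ t, m t ≠ 0) ∧
      (∀ x y, sig (x + l) * sig (y + l) = m (x + y) * (sig x * sig y)) ∧
      ∀ x y, sig (x - l) * sig (y + l) = m (y - x) * (sig x * sig y) := by
  obtain ⟨c, η, hc, hall⟩ := hσ.exists_apply_add_eq hζ h℘ hl
  have hc₀ : c ≠ 0 := ne_zero_pow two_ne_zero (hc ▸ Complex.exp_ne_zero _)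
  refine ⟨fun t => c ^ 2 * Complex.exp (η * t), fun t => by simp [hc₀, Complex.exp_ne_zero],
    fun x y => ?_, fun x y => ?_⟩
  · simp only [hall, mul_add, Complex.exp_add]
    ring
  · have hexp : Complex.exp (η * (y - x)) * Complex.exp (η * (x - l)) * Complex.exp (η * l) =
        Complex.exp (η * y) := by
      rw [← Complex.exp_add, ← Complex.exp_add]; ring_nf
    have hx := hall (x - l)
    rw [sub_add_cancel] at hx
    rw [hall, hx]
    linear_combination -(c * sig (x - l) * sig y) * hexp -
      (c * sig (x - l) * sig y * Complex.exp (η * (y - x)) * Complex.exp (η * (x - l))) * hc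

end IsWeierstrassSigma

def sigmaThreeTerm (sig : ℂ → ℂ) (a b v u : ℂ) : ℂ :=
  sig (u - v - a) * sig (v - a - b) * sig u * sig b -
    sig (v - u - b) * sig (u - a - b) * sig v * sig a

def sigmaPair (sig : ℂ → ℂ) (a v u : ℂ) : ℂ := sig (u - a) * sig (u - v)

namespace IsWeierstrassSigma

variable (hσ : IsWeierstrassSigma L zet sig) (hζ : IsWeierstrassZeta L pe zet)
  (h℘ : IsWeierstrassP L pe)
include hσ hζ h℘

lemma quasiPeriodic_sigmaThreeTerm (a b v : ℂ) {l : ℂ} (hl : l ∈ L.lattice) :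
    ∃ e : ℂ → ℂ, ∀ u, e u ≠ 0 ∧
      sigmaThreeTerm sig a b v (u + l) = e u * sigmaThreeTerm sig a b v u ∧
      sigmaPair sig a v (u + l) = e u * sigmaPair sig a v u := by
  obtain ⟨m, hm₀, hm₁, hm₂⟩ := hσ.exists_multiplier hζ h℘ hl
  refine ⟨fun u => m (2 * u - v - a), fun u => ⟨hm₀ _, ?_, ?_⟩⟩
  · have h₁ := hm₁ (u - v - a) u
    have h₂ := hm₂ (v - u - b) (u - a - b)
    rw [show u - v - a + l = u + l - v - a by ring, show u - v - a + u = 2 * u - v - a by ring]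
      at h₁
    rw [show v - u - b - l = v - (u + l) - b by ring, show u - a - b + l = u + l - a - b by ring,
      show u - a - b - (v - u - b) = 2 * u - v - a by ring] at h₂
    simp only [sigmaThreeTerm]
    linear_combination (sig (v - a - b) * sig b) * h₁ - (sig v * sig a) * h₂
  · have h := hm₁ (u - a) (u - v)
    rw [show u - a + l = u + l - a by ring, show u - v + l = u + l - v by ring,
      show u - a + (u - v) = 2 * u - v - a by ring] at h
    simpa only [sigmaPair] using h

lemma sigmaThreeTerm_self_left (a b v : ℂ) : sigmaThreeTerm sig a b v a = 0 := by
  simp only [sigmaThreeTerm, sub_sub_cancel_left, sub_self, zero_sub, hσ.neg hζ h℘]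
  ring

lemma sigmaThreeTerm_self_right (a b v : ℂ) : sigmaThreeTerm sig a b v v = 0 := by
  simp only [sigmaThreeTerm, sub_self, zero_sub, hσ.neg hζ h℘]
  ring

lemma sigmaThreeTerm_eq_zero_and_deriv_sigmaPair_ne_zero (b : ℂ) {a v : ℂ}
    (hav : a - v ∉ L.lattice) {u : ℂ} (hu : sigmaPair sig a v u = 0) :
    sigmaThreeTerm sig a b v u = 0 ∧ deriv (sigmaPair sig a v) u ≠ 0 := by
  have hD : HasDerivAt (sigmaPair sig a v)
      (deriv sig (u - a) * sig (u - v) + sig (u - a) * deriv sig (u - v)) u :=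
    ((hσ.differentiable _).hasDerivAt.comp_sub_const u a).mul
      ((hσ.differentiable _).hasDerivAt.comp_sub_const u v)
  have hN {w : ℂ} (hw : sigmaThreeTerm sig a b v w = 0) (hl : u - w ∈ L.lattice) :
      sigmaThreeTerm sig a b v u = 0 := by
    obtain ⟨e, he⟩ := hσ.quasiPeriodic_sigmaThreeTerm hζ h℘ a b v hl
    simpa [hw] using (he w).2.1
  rcases mul_eq_zero.1 hu with h | h
  · have hl := (hσ.eq_zero_iff _).1 h
    have huv : u - v ∉ L.lattice := fun h' => hav (by simpa using sub_mem h' hl)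
    refine ⟨hN (hσ.sigmaThreeTerm_self_left hζ h℘ a b v) hl, ?_⟩
    rw [hD.deriv, h, zero_mul, add_zero]
    exact mul_ne_zero (hσ.deriv_ne_zero_of_mem hζ h℘ hl) (hσ.ne_zero huv)
  · have hl := (hσ.eq_zero_iff _).1 h
    have hua : u - a ∉ L.lattice := fun h' => hav (by simpa using sub_mem hl h')
    refine ⟨hN (hσ.sigmaThreeTerm_self_right hζ h℘ a b v) hl, ?_⟩
    rw [hD.deriv, h, mul_zero, zero_add]
    exact mul_ne_zero (hσ.ne_zero hua) (hσ.deriv_ne_zero_of_mem hζ h℘ hl)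

lemma sigmaThreeTerm_eq_of_notMem (b u : ℂ) {a v : ℂ} (ha : a ∉ L.lattice)
    (hv : v ∉ L.lattice) (hav : a - v ∉ L.lattice) :
    sigmaThreeTerm sig a b v u = sig (a + b) * sig (v - b) * sigmaPair sig a v u := by
  have hdiff := hσ.differentiable
  obtain ⟨c, hc⟩ := L.exists_eq_const_mul_of_quasiPeriodic (N := sigmaThreeTerm sig a b v)
    (D := sigmaPair sig a v) (by unfold sigmaThreeTerm; fun_prop) (by unfold sigmaPair; fun_prop)
    (fun u hu => hσ.sigmaThreeTerm_eq_zero_and_deriv_sigmaPair_ne_zero hζ h℘ b hav hu)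
    (fun l hl => hσ.quasiPeriodic_sigmaThreeTerm hζ h℘ a b v hl)
  have hcav := hc (a + v)
  rw [sigmaThreeTerm, sigmaPair, show a + v - v - a = 0 by ring, hσ.apply_of_mem (zero_mem _),
    show v - (a + v) - b = -(a + b) by ring, hσ.neg hζ h℘, show a + v - a - b = v - b by ring,
    add_sub_cancel_left, add_sub_cancel_right] at hcav
  have hc' : c = sig (a + b) * sig (v - b) :=
    mul_right_cancel₀ (mul_ne_zero (hσ.ne_zero hv) (hσ.ne_zero ha)) (by linear_combination -hcav)
  rw [hc, hc']

theorem three_term (a b u v : ℂ) :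
    sig (u - v - a) * sig (v - a - b) * sig u * sig b -
      sig (v - u - b) * sig (u - a - b) * sig v * sig a =
      sig (a + b) * sig (v - b) * (sig (u - a) * sig (u - v)) := by
  have hcont := hσ.differentiable.continuous
  have hgeneric (v : ℂ) (hv : v ∉ L.lattice) : (fun a => sigmaThreeTerm sig a b v u) =
      fun a => sig (a + b) * sig (v - b) * sigmaPair sig a v u :=
    Continuous.ext_on (L.dense_setOf_notMem_lattice_and_sub v) (by unfold sigmaThreeTerm; fun_prop)
      (by unfold sigmaPair; fun_prop)
      fun a ⟨ha, hav⟩ => hσ.sigmaThreeTerm_eq_of_notMem hζ h℘ b u ha hv hav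
  have := Continuous.ext_on (L.countable_lattice.dense_compl ℂ)
    (f := fun v => sigmaThreeTerm sig a b v u)
    (g := fun v => sig (a + b) * sig (v - b) * sigmaPair sig a v u)
    (by unfold sigmaThreeTerm; fun_prop) (by unfold sigmaPair; fun_prop)
    fun v hv => congrFun (hgeneric v hv) a
  exact congrFun this v

lemma wK_three_term {a b u v : ℂ}
    (ha : a ∉ L.lattice) (hb : b ∉ L.lattice) (hab : a + b ∉ L.lattice) (hu : u ∉ L.lattice)
    (hv : v ∉ L.lattice) (huv : u - v ∉ L.lattice) :
    wK sig zet a (u - v) * Complex.exp (-(zet (u - v) - zet u + zet v) * a) * wK sig zet (a + b) v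
      + wK sig zet b (v - u) * Complex.exp (-(zet (v - u) - zet v + zet u) * b)
        * wK sig zet (a + b) u =
      wK sig zet a u * wK sig zet b v := by
  set r : ℂ → ℂ → ℂ := fun x y => sig (y - x) / (sig y * sig x)
  have hwr (x y : ℂ) : wK sig zet x y = r x y * Complex.exp (zet y * x) := by
    rw [wK, mul_div_right_comm]
  have hr : r a (u - v) * r (a + b) v + r b (v - u) * r (a + b) u = r a u * r b v := by
    have hvu : sig (v - u) = -sig (u - v) := by rw [← neg_sub, hσ.neg hζ h℘]
    simp only [r, sub_add_eq_sub_sub, hvu]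
    field_simp [hσ.ne_zero ha, hσ.ne_zero hb, hσ.ne_zero hab, hσ.ne_zero hu, hσ.ne_zero hv,
      hσ.ne_zero huv]
    linear_combination hσ.three_term hζ h℘ a b u v
  have h₁ : Complex.exp (zet (u - v) * a) * Complex.exp (-(zet (u - v) - zet u + zet v) * a) *
      Complex.exp (zet v * (a + b)) = Complex.exp (zet u * a) * Complex.exp (zet v * b) := by
    simp only [← Complex.exp_add]; ring_nf
  have h₂ : Complex.exp (zet (v - u) * b) * Complex.exp (-(zet (v - u) - zet v + zet u) * b) *
      Complex.exp (zet u * (a + b)) = Complex.exp (zet u * a) * Complex.exp (zet v * b) := by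
    simp only [← Complex.exp_add]; ring_nf
  simp only [hwr]
  linear_combination (r a (u - v) * r (a + b) v) * h₁ + (r b (v - u) * r (a + b) u) * h₂ +
    Complex.exp (zet u * a) * Complex.exp (zet v * b) * hr

end IsWeierstrassSigma

theorem statement15_general
    (ω₁ ω₂ : ℂ) (hω : LinearIndependent ℝ ![ω₁, ω₂])
    (sig zet pe : ℂ → ℂ)
    -- `pe = ℘` is the Weierstrass ℘-function of `Λ`: holomorphic off `Λ`,
    -- `Λ`-periodic, with `℘(z) − 1/z² → 0` as `z → 0`.
    (hpe_diff : DifferentiableOn ℂ pe (LatticeOf ω₁ ω₂)ᶜ)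
    (hpe_per₁ : ∀ z : ℂ, pe (z + ω₁) = pe z)
    (hpe_per₂ : ∀ z : ℂ, pe (z + ω₂) = pe z)
    (hpe_zero : Filter.Tendsto (fun z : ℂ => pe z - 1 / z ^ 2)
      (nhdsWithin 0 {(0:ℂ)}ᶜ) (nhds 0))
    -- `zet = ζ` is the Weierstrass zeta function: `ζ′ = −℘`, `ζ(z) − 1/z → 0`.
    (hzet_deriv : ∀ z ∉ LatticeOf ω₁ ω₂, HasDerivAt zet (-pe z) z)
    (hzet_zero : Filter.Tendsto (fun z : ℂ => zet z - 1 / z)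
      (nhdsWithin 0 {(0:ℂ)}ᶜ) (nhds 0))
    -- `sig = σ` is the Weierstrass sigma function: entire, vanishing exactly on
    -- `Λ`, with `σ′/σ = ζ` off `Λ` and `σ(z)/z → 1` as `z → 0`.
    (hsig_diff : Differentiable ℂ sig)
    (hsig_zero : ∀ z : ℂ, sig z = 0 ↔ z ∈ LatticeOf ω₁ ω₂)
    (hsig_deriv : ∀ z ∉ LatticeOf ω₁ ω₂, HasDerivAt sig (zet z * sig z) z)
    (hsig_one : Filter.Tendsto (fun z : ℂ => sig z / z)
      (nhdsWithin 0 {(0:ℂ)}ᶜ) (nhds 1))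
    (a b u v : ℂ)
    (ha : a ∉ LatticeOf ω₁ ω₂) (hb : b ∉ LatticeOf ω₁ ω₂)
    (hab : a + b ∉ LatticeOf ω₁ ω₂) (hu : u ∉ LatticeOf ω₁ ω₂)
    (hv : v ∉ LatticeOf ω₁ ω₂) (huv : u - v ∉ LatticeOf ω₁ ω₂) :
    wK sig zet a (u - v) * Complex.exp (-(zet (u - v) - zet u + zet v) * a)
          * wK sig zet (a + b) v
        + wK sig zet b (v - u) * Complex.exp (-(zet (v - u) - zet v + zet u) * b)
            * wK sig zet (a + b) u =
      wK sig zet a u * wK sig zet b v := by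
  let L : PeriodPair := ⟨ω₁, ω₂, hω⟩
  have hΛ : LatticeOf ω₁ ω₂ = L.lattice := latticeOf_eq_lattice L
  rw [hΛ] at hpe_diff hzet_deriv hsig_zero hsig_deriv ha hb hab hu hv huv
  exact IsWeierstrassSigma.wK_three_term ⟨hsig_diff, hsig_zero, hsig_deriv, hsig_one⟩
    ⟨hzet_deriv, hzet_zero⟩ ⟨hpe_diff, hpe_per₁, hpe_per₂, hpe_zero⟩ ha hb hab hu hv huv

/-- The three-term identity
`w(a;u−v) e^{−(ζ(u−v)−ζ(u)+ζ(v))a} w(a+b;v) + w(b;v−u) e^{−(ζ(v−u)−ζ(v)+ζ(u))b} w(a+b;u)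
  = w(a;u) w(b;v)`. -/
theorem statement15
    (ω₁ ω₂ : ℂ) (hω : LinearIndependent ℝ ![ω₁, ω₂])
    (sig zet pe : ℂ → ℂ)
    -- `pe = ℘` is the Weierstrass ℘-function of `Λ`: holomorphic off `Λ`,
    -- `Λ`-periodic, with `℘(z) − 1/z² → 0` as `z → 0`.
    (hpe_diff : DifferentiableOn ℂ pe (LatticeOf ω₁ ω₂)ᶜ)
    (hpe_per₁ : ∀ z : ℂ, pe (z + ω₁) = pe z)
    (hpe_per₂ : ∀ z : ℂ, pe (z + ω₂) = pe z)
    (hpe_zero : Filter.Tendsto (fun z : ℂ => pe z - 1 / z ^ 2)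
      (nhdsWithin 0 {(0:ℂ)}ᶜ) (nhds 0))
    -- `zet = ζ` is the Weierstrass zeta function: `ζ′ = −℘`, `ζ(z) − 1/z → 0`.
    (hzet_deriv : ∀ z ∉ LatticeOf ω₁ ω₂, HasDerivAt zet (-pe z) z)
    (hzet_zero : Filter.Tendsto (fun z : ℂ => zet z - 1 / z)
      (nhdsWithin 0 {(0:ℂ)}ᶜ) (nhds 0))
    -- `sig = σ` is the Weierstrass sigma function: entire, vanishing exactly on
    -- `Λ`, with `σ′/σ = ζ` off `Λ` and `σ(z)/z → 1` as `z → 0`.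
    (hsig_diff : Differentiable ℂ sig)
    (hsig_zero : ∀ z : ℂ, sig z = 0 ↔ z ∈ LatticeOf ω₁ ω₂)
    (hsig_deriv : ∀ z ∉ LatticeOf ω₁ ω₂, HasDerivAt sig (zet z * sig z) z)
    (hsig_one : Filter.Tendsto (fun z : ℂ => sig z / z)
      (nhdsWithin 0 {(0:ℂ)}ᶜ) (nhds 1))
    (a b u v : ℂ)
    (ha : a ∉ LatticeOf ω₁ ω₂) (hb : b ∉ LatticeOf ω₁ ω₂)
    (hab : a + b ∉ LatticeOf ω₁ ω₂) (hu : u ∉ LatticeOf ω₁ ω₂)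
    (hv : v ∉ LatticeOf ω₁ ω₂) (huv : u - v ∉ LatticeOf ω₁ ω₂)
    (hua : u - a ∉ LatticeOf ω₁ ω₂) (hvb : v - b ∉ LatticeOf ω₁ ω₂)
    (huva : u - v - a ∉ LatticeOf ω₁ ω₂) (hvub : v - u - b ∉ LatticeOf ω₁ ω₂)
    (huab : u - a - b ∉ LatticeOf ω₁ ω₂) (hvab : v - a - b ∉ LatticeOf ω₁ ω₂) :
    wK sig zet a (u - v) * Complex.exp (-(zet (u - v) - zet u + zet v) * a)
          * wK sig zet (a + b) v
        + wK sig zet b (v - u) * Complex.exp (-(zet (v - u) - zet v + zet u) * b)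
            * wK sig zet (a + b) u =
      wK sig zet a u * wK sig zet b v :=
  statement15_general ω₁ ω₂ hω sig zet pe hpe_diff hpe_per₁ hpe_per₂ hpe_zero hzet_deriv hzet_zero
    hsig_diff hsig_zero hsig_deriv hsig_one a b u v ha hb hab hu hv huv

end
end
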